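/- If h : ℝⁿ → ℝⁿ is a C¹ map that is norm-coercive (‖h(x)‖ → ∞ as ‖x‖ → ∞) and has everywhere invertible derivative, then for every c ∈ ℝⁿ the equation h(x) = c has exactly one solution (h is a bijection of ℝⁿ onto itself). -/

import Mathlib

open Set Filter Topology Metric

theorem glueIcc {β : Type*} [TopologicalSpace β] {a b c : ℝ} {f g : ℝ → β}
    (hf : ContinuousOn f (Icc a b)) (hg : ContinuousOn g (Icc b c))
    (hab : a ≤ b) (hbc : b ≤ c) (heq : f b = g b) :
    ContinuousOn (fun t => if t ≤ b then f t else g t) (Icc a c) := by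
  apply ContinuousOn.if
  · intro t ht
    have h2 := ht.2
    have hfr : frontier {a : ℝ | a ≤ b} = {b} := by
      rw [show {a : ℝ | a ≤ b} = Iic b from rfl, frontier_Iic]
    rw [hfr] at h2
    rw [show t = b from h2]; exact heq
  · apply hf.mono
    intro t ht
    have h2 : t ∈ closure (Iic b) := ht.2
    rw [closure_Iic] at h2
    exact ⟨ht.1.1, h2⟩
  · apply hg.mono
    intro t ht
    have h2 : t ∈ closure {a | ¬ a ≤ b} := ht.2
    have he : {a : ℝ | ¬ a ≤ b} = Ioi b := by ext; simp
    rw [he, closure_Ioi] at h2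
    exact ⟨h2, ht.1.2⟩

theorem uniqueLift {Y Z A : Type*} [TopologicalSpace Y] [T2Space Y] [TopologicalSpace Z]
    [TopologicalSpace A] {f : Y → Z} (hf : IsLocalHomeomorph f) {s : Set A}
    (hs : IsPreconnected s) {g₁ g₂ : A → Y} (h₁ : ContinuousOn g₁ s) (h₂ : ContinuousOn g₂ s)
    (he : Set.EqOn (f ∘ g₁) (f ∘ g₂) s) {a : A} (has : a ∈ s) (ha : g₁ a = g₂ a) :
    Set.EqOn g₁ g₂ s :=
  (T2Space.isSeparatedMap f).eqOn_of_comp_eqOn hf.isLocallyInjective hs h₁ h₂ he has ha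

theorem existsLift {Y Z : Type*} [TopologicalSpace Y] [T2Space Y] [TopologicalSpace Z] [T2Space Z]
    {f : Y → Z} (hf : IsLocalHomeomorph f)
    (hproper : ∀ K : Set Z, IsCompact K → IsCompact (f ⁻¹' K))
    {γ : ℝ → Z} (hγ : Continuous γ) {x₀ : Y} (h0 : f x₀ = γ 0) :
    ∃ L : ℝ → Y, ContinuousOn L (Icc 0 1) ∧ L 0 = x₀ ∧ ∀ t ∈ Icc 0 1, f (L t) = γ t := by
  classical
  have huniq : ∀ t : ℝ, 0 ≤ t → ∀ L₁ L₂ : ℝ → Y, ContinuousOn L₁ (Icc 0 t) →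
      ContinuousOn L₂ (Icc 0 t) → (∀ s ∈ Icc (0:ℝ) t, f (L₁ s) = f (L₂ s)) → L₁ 0 = L₂ 0 →
      EqOn L₁ L₂ (Icc 0 t) := fun t ht L₁ L₂ c1 c2 he h00 =>
    uniqueLift hf isPreconnected_Icc c1 c2 he ⟨le_rfl, ht⟩ h00
  set S : Set ℝ := {t | t ∈ Icc (0:ℝ) 1 ∧ ∃ L : ℝ → Y, ContinuousOn L (Icc 0 t) ∧ L 0 = x₀ ∧
    ∀ s ∈ Icc (0:ℝ) t, f (L s) = γ s} with hS
  have h0S : 0 ∈ S := ⟨⟨le_rfl, zero_le_one⟩, fun _ => x₀, continuousOn_const, rfl, by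
    intro s hs
    rw [show s = 0 from le_antisymm hs.2 hs.1, h0]⟩
  have hdown : ∀ t ∈ S, ∀ t' ∈ Icc (0:ℝ) t, t' ∈ S := by
    intro t ht t' ht'
    obtain ⟨hm, L, hL1, hL2, hL3⟩ := ht
    exact ⟨⟨ht'.1, ht'.2.trans hm.2⟩, L, hL1.mono (Icc_subset_Icc le_rfl ht'.2), hL2,
      fun s hs => hL3 s ⟨hs.1, hs.2.trans ht'.2⟩⟩
  have hbdd : BddAbove S := ⟨1, fun t ht => ht.1.2⟩
  set T := sSup S with hT
  have hT0 : 0 ≤ T := le_csSup hbdd h0S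
  have hT1 : T ≤ 1 := csSup_le ⟨0, h0S⟩ fun t ht => ht.1.2
  have hex : ∀ t : ℝ, ∃ L : ℝ → Y, t ∈ S → ContinuousOn L (Icc 0 t) ∧ L 0 = x₀ ∧
      ∀ s ∈ Icc (0:ℝ) t, f (L s) = γ s := by
    intro t
    by_cases ht : t ∈ S
    · exact ht.2.imp fun L hL => fun _ => hL
    · exact ⟨fun _ => x₀, fun h => absurd h ht⟩
  choose ℓ hℓ using hex
  have hℓc : ∀ t ∈ S, ContinuousOn (ℓ t) (Icc 0 t) := fun t ht => (hℓ t ht).1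
  have hℓ0 : ∀ t ∈ S, ℓ t 0 = x₀ := fun t ht => (hℓ t ht).2.1
  have hℓf : ∀ t ∈ S, ∀ s ∈ Icc (0:ℝ) t, f (ℓ t s) = γ s := fun t ht => (hℓ t ht).2.2
  set L : ℝ → Y := fun t => ℓ t t with hLdef
  have hagree : ∀ t ∈ S, EqOn L (ℓ t) (Icc 0 t) := by
    intro t ht s hs
    have hsS : s ∈ S := hdown t ht s hs
    show ℓ s s = ℓ t s
    exact huniq s hs.1 (ℓ s) (ℓ t) (hℓc s hsS) ((hℓc t ht).mono (Icc_subset_Icc le_rfl hs.2))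
      (fun u hu => by rw [hℓf s hsS u hu, hℓf t ht u ⟨hu.1, hu.2.trans hs.2⟩])
      (by rw [hℓ0 s hsS, hℓ0 t ht]) ⟨hs.1, le_rfl⟩
  have hLS : ∀ t ∈ S, ContinuousOn L (Icc 0 t) ∧ L 0 = x₀ ∧ ∀ s ∈ Icc (0:ℝ) t, f (L s) = γ s := by
    intro t ht
    refine ⟨(hℓc t ht).congr (hagree t ht), ?_, fun s hs => ?_⟩
    · rw [hagree t ht ⟨le_rfl, ht.1.1⟩, hℓ0 t ht]
    · rw [hagree t ht hs]; exact hℓf t ht s hs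
  suffices h1S : 1 ∈ S by
    obtain ⟨hc, h00, hff⟩ := hLS 1 h1S
    exact ⟨L, hc, h00, hff⟩
  -- extension step
  have extend : ∀ (t' u : ℝ) (e : OpenPartialHomeomorph Y Z), f = ↑e → t' ∈ S → t' ≤ u → u ≤ 1 →
      L t' ∈ e.source → (∀ s ∈ Icc t' u, γ s ∈ e.target) → u ∈ S := by
    intro t' u e hfe ht' htu hu1 hsrc htar
    have h0t' : 0 ≤ t' := ht'.1.1
    obtain ⟨hcL, h0L, hfL⟩ := hLS t' ht'
    set σ : ℝ → Y := fun s => e.symm (γ s) with hσ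
    have hσc : ContinuousOn σ (Icc t' u) :=
      e.continuousOn_symm.comp hγ.continuousOn fun s hs => htar s hs
    have hσf : ∀ s ∈ Icc t' u, f (σ s) = γ s := fun s hs => by
      rw [hfe]; exact e.right_inv (htar s hs)
    have hjoin : L t' = σ t' := by
      have hγt' : γ t' = e (L t') := by rw [← (hfL t' ⟨h0t', le_rfl⟩)]; rw [hfe]
      show L t' = e.symm (γ t')
      rw [hγt', e.left_inv hsrc]
    refine ⟨⟨h0t'.trans htu, hu1⟩, fun s => if s ≤ t' then L s else σ s,
      glueIcc hcL hσc h0t' htu hjoin, ?_, ?_⟩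
    · simp only [if_pos h0t']; exact h0L
    · intro s hs
      by_cases hst : s ≤ t'
      · simp only [if_pos hst]; exact hfL s ⟨hs.1, hst⟩
      · simp only [if_neg hst]; exact hσf s ⟨(not_le.mp hst).le, hs.2⟩
  -- step A : T > 0
  obtain ⟨e₀, he₀s, hfe₀⟩ := hf x₀
  have hγ0 : γ 0 ∈ e₀.target := by
    rw [← h0, hfe₀]; exact e₀.map_source he₀s
  obtain ⟨δ₀, hδ₀, hball₀⟩ :=
    Metric.eventually_nhds_iff_ball.mp (hγ.continuousAt (e₀.open_target.mem_nhds hγ0))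
  have hL0 : L 0 = x₀ := (hLS 0 h0S).2.1
  have hu₀S : min 1 (δ₀/2) ∈ S := by
    refine extend 0 (min 1 (δ₀/2)) e₀ hfe₀ h0S (le_min zero_le_one (by positivity))
      (min_le_left _ _) (by rw [hL0]; exact he₀s) ?_
    intro s hs
    apply hball₀
    rw [mem_ball, Real.dist_eq, sub_zero, abs_of_nonneg hs.1]
    exact lt_of_le_of_lt (hs.2.trans (min_le_right _ _)) (by linarith)
  have hTpos : 0 < T := lt_of_lt_of_le (lt_min one_pos (by positivity)) (le_csSup hbdd hu₀S)
  -- step B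
  have hev : ∀ᶠ t in 𝓝[<] T, t ∈ S ∧ 0 ≤ t ∧ t ≤ 1 := by
    filter_upwards [Ioo_mem_nhdsLT_of_mem (show T ∈ Ioc 0 T from ⟨hTpos, le_rfl⟩)] with t ht
    obtain ⟨s, hsS, hts⟩ := exists_lt_of_lt_csSup ⟨0, h0S⟩ ht.2
    exact ⟨hdown s hsS t ⟨ht.1.le, hts.le⟩, ht.1.le, (ht.2.le).trans hT1⟩
  have hKc : IsCompact (f ⁻¹' (γ '' Icc 0 1)) := hproper _ (isCompact_Icc.image hγ)
  have hmapK : ∀ᶠ t in 𝓝[<] T, L t ∈ f ⁻¹' (γ '' Icc 0 1) := by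
    filter_upwards [hev] with t ht
    have := (hLS t ht.1).2.2 t ⟨ht.2.1, le_rfl⟩
    simp only [mem_preimage, this]
    exact mem_image_of_mem γ ⟨ht.2.1, ht.2.2⟩
  obtain ⟨x', hx'K, hclx⟩ := hKc.exists_clusterPt (le_principal_iff.mpr (mem_map.mpr hmapK))
  have hfL_ev : (f ∘ L) =ᶠ[𝓝[<] T] γ := by
    filter_upwards [hev] with t ht
    exact (hLS t ht.1).2.2 t ⟨ht.2.1, le_rfl⟩
  have hfx' : f x' = γ T := by
    have h1 : ClusterPt (f x') (Filter.map γ (𝓝[<] T)) := by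
      have := hclx.map (hf.continuous.continuousAt (x := x')) (Filter.tendsto_map (f := f))
      rwa [Filter.map_map, Filter.map_congr hfL_ev] at this
    have h2 : Filter.map γ (𝓝[<] T) ≤ 𝓝 (γ T) :=
      (hγ.continuousAt).mono_left nhdsWithin_le_nhds
    exact eq_of_nhds_neBot (h1.mono h2)
  obtain ⟨e, hes, hfe⟩ := hf x'
  have hγT : γ T ∈ e.target := by rw [← hfx', hfe]; exact e.map_source hes
  obtain ⟨δ, hδ, hball⟩ :=
    Metric.eventually_nhds_iff_ball.mp (hγ.continuousAt (e.open_target.mem_nhds hγT))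
  have hfreq : ∃ᶠ t in 𝓝[<] T, L t ∈ e.source := by
    rw [← Filter.frequently_map (m := L)]
    rw [Filter.frequently_iff]
    intro V hV
    obtain ⟨y, hy1, hy2⟩ := clusterPt_iff_nonempty.mp hclx (e.open_source.mem_nhds hes) hV
    exact ⟨y, hy2, hy1⟩
  have hevT : ∀ᶠ t in 𝓝[<] T, max (T - δ/2) 0 < t ∧ t < T ∧ t ∈ S := by
    filter_upwards [Ioo_mem_nhdsLT_of_mem
      (show T ∈ Ioc (max (T - δ/2) 0) T from ⟨max_lt (by linarith) hTpos, le_rfl⟩), hev]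
      with t ht ht2
    exact ⟨ht.1, ht.2, ht2.1⟩
  obtain ⟨t', ht'src, ht'max, ht'T, ht'S⟩ := (hfreq.and_eventually hevT).exists
  set u := min 1 (T + δ/2) with hu
  have huS : u ∈ S := by
    refine extend t' u e hfe ht'S (le_trans ht'T.le (le_min hT1 (by linarith))) (min_le_left _ _)
      ht'src ?_
    intro s hs
    apply hball
    rw [mem_ball, Real.dist_eq, abs_sub_lt_iff]
    constructor
    · have : s ≤ T + δ/2 := hs.2.trans (min_le_right _ _)
      linarith
    · have h1 : T - δ/2 < t' := lt_of_le_of_lt (le_max_left _ _) ht'max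
      have : T - δ/2 < s := lt_of_lt_of_le h1 hs.1
      linarith
  have huT : u ≤ T := le_csSup hbdd huS
  have hT1' : T = 1 := by
    by_contra hne
    have hTlt : T < 1 := lt_of_le_of_ne hT1 hne
    have : T < u := lt_min hTlt (by linarith)
    linarith
  have : u = 1 := by rw [hu, hT1']; exact min_eq_left (by linarith)
  rwa [this] at huS



theorem bijective_aux {E : Type*} [NormedAddCommGroup E] [NormedSpace ℝ E]
    (h : E → E) (hlh : IsLocalHomeomorph h)
    (hcharts : ∀ x : E, ∃ e : OpenPartialHomeomorph E E, x ∈ e.source ∧ (e : E → E) = h)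
    (hproper : ∀ K : Set E, IsCompact K → IsCompact (h ⁻¹' K)) :
    Function.Bijective h := by
  classical
  have hcont : Continuous h := hlh.continuous
  -- surjectivity
  have hsurj : Function.Surjective h := by
    have hpm : IsProperMap h := isProperMap_iff_isCompact_preimage.mpr ⟨hcont, hproper⟩
    have hclopen : IsClopen (range h) := ⟨hpm.isClosed_range, hlh.isOpenMap.isOpen_range⟩
    have : range h = univ := hclopen.eq_univ ⟨h 0, mem_range_self 0⟩
    exact range_eq_univ.mp this
  -- injectivity
  refine ⟨?_, hsurj⟩
  intro a b hab
  set c : E := h b with hc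
  set H : E → ℝ → E := fun x t => h x + t • (c - h x) with hHdef
  have hH0 : ∀ x, H x 0 = h x := by intro x; simp [hHdef]
  have hH1 : ∀ x, H x 1 = c := by intro x; simp [hHdef]
  have hHcont : ∀ x, Continuous (H x) := by
    intro x
    exact continuous_const.add (continuous_id.smul continuous_const)
  have hHjoint : Continuous (fun p : E × ℝ => H p.1 p.2) :=
    (hcont.comp continuous_fst).add
      (continuous_snd.smul (continuous_const.sub (hcont.comp continuous_fst)))
  have hlift : ∀ x : E, ∃ L : ℝ → E, ContinuousOn L (Icc 0 1) ∧ L 0 = x ∧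
      ∀ t ∈ Icc (0:ℝ) 1, h (L t) = H x t := by
    intro x
    exact existsLift hlh hproper (hHcont x) (by rw [hH0])
  choose Lf hLc hL0 hLf using hlift
  set Ψ : E → E := fun x => Lf x 1 with hΨdef
  -- fixed points
  have hΨfix : ∀ x : E, h x = c → Ψ x = x := by
    intro x hx
    have hHconst : ∀ t : ℝ, H x t = h x := by intro t; simp [hHdef, hx]
    have := uniqueLift hlh isPreconnected_Icc (hLc x)
      (continuousOn_const (c := x))
      (fun t ht => by
        show h (Lf x t) = h x
        rw [hLf x t ht, hHconst t])
      (⟨le_rfl, zero_le_one⟩ : (0:ℝ) ∈ Icc (0:ℝ) 1) (hL0 x)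
    exact this ⟨zero_le_one, le_rfl⟩
  -- local constancy of Ψ
  have hconst : ∀ x₀ : E, ∀ᶠ x in 𝓝 x₀, Ψ x = Ψ x₀ := by
    intro x₀
    set L : ℝ → E := Lf x₀ with hLdefn
    have hcov : ∀ t : Icc (0:ℝ) 1, ∃ (V : Set ℝ) (e : OpenPartialHomeomorph E E),
        IsOpen V ∧ (t:ℝ) ∈ V ∧ (e : E → E) = h ∧
        ∀ s ∈ V ∩ Icc (0:ℝ) 1, L s ∈ e.source := by
      rintro ⟨t, ht⟩
      obtain ⟨e, hesrc, hce⟩ := hcharts (L t)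
      have hmem : L ⁻¹' e.source ∈ 𝓝[Icc (0:ℝ) 1] t :=
        (hLc x₀) t ht (e.open_source.mem_nhds hesrc)
      obtain ⟨V, hVsub, hVopen, hVmem⟩ := mem_nhdsWithin.mp hmem
      exact ⟨V, e, hVsub, hVopen, hce, fun s hs => hVmem hs⟩
    choose V ch hVopen hVmem hchh hchsrc using hcov
    obtain ⟨δ, hδ, hleb⟩ := lebesgue_number_lemma_of_metric (isCompact_Icc (a := (0:ℝ)) (b := 1))
      hVopen (fun t ht => mem_iUnion.mpr ⟨⟨t, ht⟩, hVmem ⟨t, ht⟩⟩)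
    obtain ⟨m, hmpos, hmδ⟩ : ∃ m : ℕ, (0:ℝ) < (m:ℝ) ∧ 1/(m:ℝ) < δ := by
      obtain ⟨m', hm'⟩ := exists_nat_one_div_lt hδ
      exact ⟨m' + 1, by positivity, by exact_mod_cast hm'⟩
    -- charts for subintervals
    have hEch : ∀ i : ℕ, ∃ e : OpenPartialHomeomorph E E, (e : E → E) = h ∧
        ∀ s : ℝ, (i:ℝ)/m ≤ s → s ≤ ((i:ℝ)+1)/m → s ∈ Icc (0:ℝ) 1 → L s ∈ e.source := by
      intro i
      by_cases hi : (i:ℝ)/m ≤ 1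
      · have hp : (i:ℝ)/m ∈ Icc (0:ℝ) 1 := ⟨by positivity, hi⟩
        obtain ⟨j, hj⟩ := hleb ((i:ℝ)/m) hp
        refine ⟨ch j, hchh j, ?_⟩
        intro s h1 h2 h3
        apply hchsrc j
        refine ⟨hj ?_, h3⟩
        rw [mem_ball, Real.dist_eq, abs_sub_lt_iff]
        have hdiv : ((i:ℝ)+1)/m = (i:ℝ)/m + 1/m := by ring
        constructor
        · linarith [hmδ, h2]
        · linarith [hmδ, h1]
      · obtain ⟨e, he1, he2⟩ := hcharts (L 0)
        refine ⟨e, he2, ?_⟩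
        intro s h1 h2 h3
        exfalso
        have hgt : (1:ℝ) < (i:ℝ)/m := not_le.mp hi
        have := h3.2
        linarith
    choose ch' hche hchs using hEch
    -- junction radii
    have hjun : ∀ i : ℕ, ∃ r : ℝ, 0 < r ∧ ((i:ℝ)+1 ≤ (m:ℝ) →
        ∀ y ∈ ball (H x₀ (((i:ℝ)+1)/m)) r, (ch' i).symm y = (ch' (i+1)).symm y) := by
      intro i
      by_cases hi : ((i:ℝ)+1) ≤ (m:ℝ)
      · set p : ℝ := ((i:ℝ)+1)/m with hpdef
        have hp1 : p ∈ Icc (0:ℝ) 1 := ⟨by positivity, by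
          rw [hpdef, div_le_one hmpos]; exact hi⟩
        have hle1 : (i:ℝ)/m ≤ p := by rw [hpdef]; gcongr; linarith
        have hle2 : p ≤ ((i:ℝ)+1+1)/m := by rw [hpdef]; gcongr <;> linarith
        have hsrc1 : L p ∈ (ch' i).source := hchs i p hle1 le_rfl hp1
        have hsrc2 : L p ∈ (ch' (i+1)).source := by
          have c1 : ((i+1:ℕ):ℝ)/m ≤ p := by push_cast; rw [hpdef]
          have c2 : p ≤ (((i+1:ℕ):ℝ)+1)/m := by push_cast; exact hle2
          exact hchs (i+1) p c1 c2 hp1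
        have hγp : H x₀ p = h (L p) := (hLf x₀ p hp1).symm
        have ht1 : H x₀ p ∈ (ch' i).target := by
          rw [hγp, ← hche i]; exact (ch' i).map_source hsrc1
        have ht2 : H x₀ p ∈ (ch' (i+1)).target := by
          rw [hγp, ← hche (i+1)]; exact (ch' (i+1)).map_source hsrc2
        have hnb : (ch' i).target ∩ (ch' (i+1)).target ∈ 𝓝 (H x₀ p) :=
          inter_mem ((ch' i).open_target.mem_nhds ht1) ((ch' (i+1)).open_target.mem_nhds ht2)
        obtain ⟨r, hr, hball⟩ := Metric.mem_nhds_iff.mp hnb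
        refine ⟨r, hr, fun _ => ?_⟩
        have heq : Set.EqOn ((ch' i).symm) ((ch' (i+1)).symm) (ball (H x₀ p) r) := by
          refine uniqueLift hlh (convex_ball _ _).isPreconnected
            ((ch' i).continuousOn_symm.mono fun y hy => ((hball hy).1))
            ((ch' (i+1)).continuousOn_symm.mono fun y hy => ((hball hy).2))
            ?_ (mem_ball_self hr) ?_
          · intro y hy
            show h ((ch' i).symm y) = h ((ch' (i+1)).symm y)
            have k1 : h ((ch' i).symm y) = y := by
              rw [← hche i]; exact (ch' i).right_inv (hball hy).1
            have k2 : h ((ch' (i+1)).symm y) = y := by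
              rw [← hche (i+1)]; exact (ch' (i+1)).right_inv (hball hy).2
            rw [k1, k2]
          · show (ch' i).symm (H x₀ p) = (ch' (i+1)).symm (H x₀ p)
            have e1 : H x₀ p = (ch' i) (L p) := by
              rw [hγp, ← hche i]
            have e2 : H x₀ p = (ch' (i+1)) (L p) := by
              rw [hγp, ← hche (i+1)]
            rw [show ((ch' i).symm (H x₀ p)) = L p by rw [e1, (ch' i).left_inv hsrc1],
              show ((ch' (i+1)).symm (H x₀ p)) = L p by rw [e2, (ch' (i+1)).left_inv hsrc2]]
        exact fun y hy => heq hy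
      · exact ⟨1, one_pos, fun h' => absurd h' hi⟩
    choose r hr hrjun using hjun
    -- conditions at x₀
    have hA0 : ∀ i : ℕ, i < m → ∀ t ∈ Icc ((i:ℝ)/m) (((i:ℝ)+1)/m),
        H x₀ t ∈ (ch' i).target := by
      intro i hi t ht
      have him : ((i:ℝ)+1) ≤ (m:ℝ) := by exact_mod_cast hi
      have htm : t ∈ Icc (0:ℝ) 1 := ⟨le_trans (by positivity) ht.1,
        le_trans ht.2 ((div_le_one hmpos).mpr him)⟩
      have hsrc := hchs i t ht.1 ht.2 htm
      rw [show H x₀ t = h (L t) from (hLf x₀ t htm).symm, ← hche i]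
      exact (ch' i).map_source hsrc
    have h0src : x₀ ∈ (ch' 0).source := by
      have h00 : L 0 = x₀ := hL0 x₀
      have := hchs 0 0 (by simp) (by positivity) ⟨le_rfl, zero_le_one⟩
      rwa [h00] at this
    -- generic claim
    have claimG : ∀ x : E,
        (∀ i ∈ Finset.range m, ∀ t ∈ Icc ((i:ℝ)/m) (((i:ℝ)+1)/m), H x t ∈ (ch' i).target) →
        (∀ i ∈ Finset.range m, H x (((i:ℝ)+1)/m) ∈ ball (H x₀ (((i:ℝ)+1)/m)) (r i)) →
        x ∈ (ch' 0).source → Ψ x = (ch' m).symm c := by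
      intro x hxA hxB hxC
      have claim : ∀ i : ℕ, i ≤ m → Lf x ((i:ℝ)/m) = (ch' i).symm (H x ((i:ℝ)/m)) := by
        intro i
        induction i with
        | zero =>
          intro _
          simp only [Nat.cast_zero, zero_div]
          rw [hL0 x, hH0 x]
          rw [show h x = (ch' 0) x from (congrFun (hche 0) x).symm, (ch' 0).left_inv hxC]
        | succ i ih =>
          intro hi1
          have hi : i < m := Nat.lt_of_succ_le hi1
          have ihh := ih (le_of_lt hi)
          have him : ((i:ℝ)+1) ≤ (m:ℝ) := by exact_mod_cast hi1
          have ht01 : (i:ℝ)/m ≤ ((i:ℝ)+1)/m := by gcongr; linarith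
          have hJ : Icc ((i:ℝ)/m) (((i:ℝ)+1)/m) ⊆ Icc (0:ℝ) 1 := by
            intro s hs
            exact ⟨le_trans (by positivity) hs.1, le_trans hs.2 ((div_le_one hmpos).mpr him)⟩
          have hxAi := hxA i (Finset.mem_range.mpr hi)
          have hEq : Set.EqOn (Lf x) (fun s => (ch' i).symm (H x s))
              (Icc ((i:ℝ)/m) (((i:ℝ)+1)/m)) := by
            refine uniqueLift hlh isPreconnected_Icc ((hLc x).mono hJ)
              ((ch' i).continuousOn_symm.comp (hHcont x).continuousOn
                fun s hs => hxAi s hs)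
              ?_ (⟨le_rfl, ht01⟩ : (i:ℝ)/m ∈ Icc ((i:ℝ)/m) (((i:ℝ)+1)/m)) ihh
            intro s hs
            show h (Lf x s) = h ((ch' i).symm (H x s))
            rw [hLf x s (hJ hs), ← hche i, (ch' i).right_inv (hxAi s hs)]
          have h1 := hEq (⟨ht01, le_rfl⟩ : ((i:ℝ)+1)/m ∈ Icc ((i:ℝ)/m) (((i:ℝ)+1)/m))
          have hcast : ((i+1:ℕ):ℝ)/m = ((i:ℝ)+1)/m := by push_cast; ring
          rw [hcast, h1]
          exact hrjun i him _ (hxB i (Finset.mem_range.mpr hi))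
      have hmm : ((m:ℕ):ℝ)/(m:ℝ) = 1 := div_self (ne_of_gt hmpos)
      have hfin := claim m le_rfl
      rw [hmm] at hfin
      show Lf x 1 = _
      rw [hfin, hH1 x]
    -- conditions hold eventually
    have hAev : ∀ᶠ x in 𝓝 x₀, ∀ i ∈ Finset.range m,
        ∀ t ∈ Icc ((i:ℝ)/m) (((i:ℝ)+1)/m), H x t ∈ (ch' i).target := by
      rw [Filter.eventually_all_finset]
      intro i hi
      have hi' := Finset.mem_range.mp hi
      have hsub : {x₀} ×ˢ (Icc ((i:ℝ)/m) (((i:ℝ)+1)/m)) ⊆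
          (fun p : E × ℝ => H p.1 p.2) ⁻¹' (ch' i).target := by
        rintro ⟨x, t⟩ ⟨hx, ht⟩
        simp only [mem_singleton_iff] at hx
        subst hx
        exact hA0 i hi' t ht
      obtain ⟨Vx, Vt, hVxo, hVto, hxV, htV, hVsub⟩ := generalized_tube_lemma
        isCompact_singleton isCompact_Icc ((ch' i).open_target.preimage hHjoint) hsub
      filter_upwards [hVxo.mem_nhds (hxV rfl)] with x hx t ht
      exact hVsub (mk_mem_prod hx (htV ht))
    have hBev : ∀ᶠ x in 𝓝 x₀, ∀ i ∈ Finset.range m,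
        H x (((i:ℝ)+1)/m) ∈ ball (H x₀ (((i:ℝ)+1)/m)) (r i) := by
      rw [Filter.eventually_all_finset]
      intro i _
      have hcx : Continuous (fun x => H x (((i:ℝ)+1)/m)) :=
        hcont.add (continuous_const.smul (continuous_const.sub hcont))
      exact hcx.continuousAt (ball_mem_nhds _ (hr i))
    have hCev : ∀ᶠ x in 𝓝 x₀, x ∈ (ch' 0).source :=
      (ch' 0).open_source.mem_nhds h0src
    filter_upwards [hAev, hBev, hCev] with x hxA hxB hxC
    rw [claimG x hxA hxB hxC, claimG x₀ (fun i hi => hA0 i (Finset.mem_range.mp hi))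
      (fun i _ => mem_ball_self (hr i)) h0src]
  -- conclude
  have hlc : IsLocallyConstant Ψ := (IsLocallyConstant.iff_eventually_eq Ψ).mpr hconst
  have hab' : Ψ a = Ψ b := hlc.apply_eq_of_preconnectedSpace a b
  calc a = Ψ a := (hΨfix a hab).symm
  _ = Ψ b := hab'
  _ = b := hΨfix b rfl

theorem hadamard_global_inverse (n : ℕ)
    (h : EuclideanSpace ℝ (Fin n) → EuclideanSpace ℝ (Fin n))
    (hC1 : ContDiff ℝ 1 h)
    (hinv : ∀ x, Function.Bijective (fderiv ℝ h x))
    (hcoer : ∀ M : ℝ, ∃ R : ℝ, ∀ x, R ≤ ‖x‖ → M ≤ ‖h x‖) :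
    Function.Bijective h ∧ ∀ c, ∃! x, h x = c := by
  have hcharts : ∀ x : EuclideanSpace ℝ (Fin n),
      ∃ e : OpenPartialHomeomorph (EuclideanSpace ℝ (Fin n)) (EuclideanSpace ℝ (Fin n)),
        x ∈ e.source ∧ (e : _ → _) = h := by
    intro x
    have hd : HasStrictFDerivAt h (fderiv ℝ h x) x :=
      (hC1.contDiffAt).hasStrictFDerivAt one_ne_zero
    let φ : EuclideanSpace ℝ (Fin n) ≃L[ℝ] EuclideanSpace ℝ (Fin n) :=
      (LinearEquiv.ofBijective ((fderiv ℝ h x) : _ →ₗ[ℝ] _) (hinv x)).toContinuousLinearEquiv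
    have hφ : (φ : _ →L[ℝ] _) = fderiv ℝ h x := by ext v; rfl
    have hd' : HasStrictFDerivAt h (φ : _ →L[ℝ] _) x := hφ ▸ hd
    exact ⟨hd'.toOpenPartialHomeomorph h, hd'.mem_toOpenPartialHomeomorph_source,
      hd'.toOpenPartialHomeomorph_coe⟩
  have hlh : IsLocalHomeomorph h := by
    intro x
    obtain ⟨e, he1, he2⟩ := hcharts x
    exact ⟨e, he1, he2.symm⟩
  have hproper : ∀ K : Set (EuclideanSpace ℝ (Fin n)), IsCompact K → IsCompact (h ⁻¹' K) := by
    intro K hK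
    obtain ⟨M, hM⟩ := hK.isBounded.exists_norm_le
    obtain ⟨R, hR⟩ := hcoer (M + 1)
    apply Metric.isCompact_of_isClosed_isBounded (hK.isClosed.preimage hC1.continuous)
    apply (Metric.isBounded_closedBall (x := (0:EuclideanSpace ℝ (Fin n))) (r := |R|)).subset
    intro x hx
    simp only [mem_closedBall, dist_zero_right]
    by_contra hcon
    push_neg at hcon
    have h1 := hR x (le_of_lt (lt_of_le_of_lt (le_abs_self R) hcon))
    have h2 := hM _ hx
    linarith
  have hbij := bijective_aux h hlh hcharts hproper
  exact ⟨hbij, fun c => by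
    obtain ⟨x, hx⟩ := hbij.2 c
    exact ⟨x, hx, fun y hy => hbij.1 (hy.trans hx.symm)⟩⟩
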